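/- Inference rule R9: let v : AP → B₃ be a three-valued valuation and let C₁, …, Cₙ be a nonempty list of clauses (each a nonempty finite list of literals) such that in each clause Cᵢ at most one literal has a definite Kleene value under v (all other literals of Cᵢ have value ?). If the Kleene disjunction of the conjunctive Kleene values of C₁, …, Cₙ equals ff, then for every clause Cᵢ and every literal ℓ of Cᵢ whose Kleene value under v is definite: if ℓ is a positive atom a then v a = ff, and if ℓ is a negated atom ¬a then v a = tt. -/

import Mathlib

/-- The three-valued Kleene domain: `some true` is tt, `some false` is ff, `none` is ?. -/
abbrev B3 := Option Bool

/-- Kleene conjunction. -/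
def kand : B3 → B3 → B3
  | some false, _ => some false
  | _, some false => some false
  | some true, some true => some true
  | _, _ => none

/-- Kleene disjunction. -/
def kor : B3 → B3 → B3
  | some true, _ => some true
  | _, some true => some true
  | some false, some false => some false
  | _, _ => none

/-- Kleene negation. -/
def knot : B3 → B3
  | some b => some (!b)
  | none => none

/-- Kleene conjunction of a list: `a₁ ⊓ a₂ ⊓ … ⊓ aₙ`. -/
def kandList (l : List B3) : B3 := l.foldr kand (some true)

/-- Kleene disjunction of a list: `a₁ ⊔ a₂ ⊔ … ⊔ aₙ`. -/
def korList (l : List B3) : B3 := l.foldr kor (some false)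

/-- A literal: a positive or a negated atom. -/
inductive Lit (AP : Type) : Type
  | pos : AP → Lit AP
  | neg : AP → Lit AP

/-- The Kleene value of a literal under a three-valued valuation. -/
def litVal {AP : Type} (v : AP → B3) : Lit AP → B3
  | .pos a => v a
  | .neg a => knot (v a)

/-- Conjunctive Kleene value of a clause (a list of literals). -/
def clauseAnd {AP : Type} (v : AP → B3) (C : List (Lit AP)) : B3 :=
  kandList (C.map (litVal v))

/-- Disjunctive Kleene value of a clause (a list of literals). -/
def clauseOr {AP : Type} (v : AP → B3) (C : List (Lit AP)) : B3 :=
  korList (C.map (litVal v))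

/-!
A disjunction is ff only if every disjunct is ff, and a conjunction is ff only if some conjunct
is ff. So each clause `C` contains a literal of value ff; that literal is definite, and since `C`
has at most one definite literal it is the only one. Hence every definite literal of `C` has
value ff, which for `a` means `v a = ff` and for `¬a` means `v a = tt`.
-/

theorem List.eq_of_mem_of_countP_le_one {α : Type*} {p : α → Bool} {l : List α}
    (hl : l.countP p ≤ 1) {a b : α} (ha : a ∈ l) (hb : b ∈ l) (hpa : p a) (hpb : p b) :
    a = b := by
  rw [countP_eq_length_filter] at hl
  have ha' : a ∈ l.filter p := mem_filter.2 ⟨ha, hpa⟩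
  have hb' : b ∈ l.filter p := mem_filter.2 ⟨hb, hpb⟩
  generalize l.filter p = f at hl ha' hb'
  match f, hl with
  | [_], _ => simp_all

theorem kor_eq_ff_iff {a b : B3} :
    kor a b = some false ↔ a = some false ∧ b = some false := by
  rcases a with _ | _ | _ <;> rcases b with _ | _ | _ <;> simp [kor]

theorem kand_eq_ff_iff {a b : B3} :
    kand a b = some false ↔ a = some false ∨ b = some false := by
  rcases a with _ | _ | _ <;> rcases b with _ | _ | _ <;> simp [kand]

theorem korList_eq_ff_iff {l : List B3} :
    korList l = some false ↔ ∀ x ∈ l, x = some false := by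
  induction l with
  | nil => simp [korList]
  | cons a t ih => exact kor_eq_ff_iff.trans (by rw [← korList, ih, List.forall_mem_cons])

theorem kandList_eq_ff_iff {l : List B3} : kandList l = some false ↔ some false ∈ l := by
  induction l with
  | nil => simp [kandList]
  | cons a t ih => exact kand_eq_ff_iff.trans (by rw [← kandList, ih, List.mem_cons, eq_comm])

theorem litVal_eq_of_clauseAnd_eq_ff {AP : Type} {v : AP → B3} {C : List (Lit AP)}
    (hdef : C.countP (fun ℓ => (litVal v ℓ).isSome) ≤ 1) (hC : clauseAnd v C = some false)
    {ℓ : Lit AP} (hℓ : ℓ ∈ C) (hℓdef : litVal v ℓ ≠ none) :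
    litVal v ℓ = some false := by
  obtain ⟨ℓ', hℓ', hℓ'ff⟩ := List.mem_map.1 (kandList_eq_ff_iff.1 hC)
  have hsame : ℓ = ℓ' := List.eq_of_mem_of_countP_le_one hdef hℓ hℓ'
    (Option.isSome_iff_ne_none.2 hℓdef) (by simp [hℓ'ff])
  rwa [hsame]

theorem litVal_pos_eq_ff {AP : Type} {v : AP → B3} {a : AP} :
    litVal v (.pos a) = some false ↔ v a = some false := Iff.rfl

theorem litVal_neg_eq_ff {AP : Type} {v : AP → B3} {a : AP} :
    litVal v (.neg a) = some false ↔ v a = some true := by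
  rcases h : v a with _ | _ | _ <;> simp [litVal, knot, h]

theorem rule_R9_general {AP : Type} (v : AP → B3) (Cs : List (List (Lit AP)))
    (hdef : ∀ C ∈ Cs, (C.countP (fun ℓ => (litVal v ℓ).isSome)) ≤ 1)
    (h : korList (Cs.map (clauseAnd v)) = some false) :
    ∀ C ∈ Cs, ∀ ℓ ∈ C, litVal v ℓ ≠ none →
      (∀ a : AP, ℓ = Lit.pos a → v a = some false) ∧
      (∀ a : AP, ℓ = Lit.neg a → v a = some true) := by
  intro C hC ℓ hℓ hℓdef
  have hCff : clauseAnd v C = some false :=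
    korList_eq_ff_iff.1 h _ (List.mem_map_of_mem hC)
  have hℓff := litVal_eq_of_clauseAnd_eq_ff (hdef C hC) hCff hℓ hℓdef
  exact ⟨fun a ha => litVal_pos_eq_ff.1 (ha ▸ hℓff),
    fun a ha => litVal_neg_eq_ff.1 (ha ▸ hℓff)⟩

theorem rule_R9 {AP : Type} (v : AP → B3) (Cs : List (List (Lit AP)))
    (hne : Cs ≠ []) (hCne : ∀ C ∈ Cs, C ≠ [])
    (hdef : ∀ C ∈ Cs, (C.countP (fun ℓ => (litVal v ℓ).isSome)) ≤ 1)
    (h : korList (Cs.map (clauseAnd v)) = some false) :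
    ∀ C ∈ Cs, ∀ ℓ ∈ C, litVal v ℓ ≠ none →
      (∀ a : AP, ℓ = Lit.pos a → v a = some false) ∧
      (∀ a : AP, ℓ = Lit.neg a → v a = some true) :=
  rule_R9_general v Cs hdef h
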